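/- arXiv:nlin/0209014 — 2 statements merged into one kernel-verified Lean document; each statement's English description precedes it below -/
import Mathlib

section
/- Define polynomial functions V_r^{(k)}(λ) of λ = (λ_1,…,λ_n) ∈ ℝⁿ for r = 1,…,n and k ≥ 1 by the recursion: V_r^{(1)} = ρ_r, V_{n+1}^{(k)} := 0, and V_r^{(k+1)} = − V_{r+1}^{(k)} + ρ_r V_1^{(k)}. Then every family {V_1^{(k)},…,V_n^{(k)}} satisfies the Stäckel separability conditions: for all k ≥ 1, all r = 1,…,n and all i = 1,…,n, ∂V_r^{(k)}/∂λ_i = −(∂ρ_r/∂λ_i) · ∂V_1^{(k)}/∂λ_i; that is, ∂_i V_r^{(k)} = v_r^i ∂_i V_1^{(k)} where v_r^i = −∂ρ_r/∂λ_i are the eigenvalues of the one-Casimir Killing tensors. -/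
/-!
Write `∂` for `∂/∂λ_i` and `σ_r` for the Viète polynomials of the variables other than `λ_i`.
Since `ρ_{r+1} = σ_{r+1} - λ_i σ_r` and the `σ_r` do not involve `λ_i`, we get
`∂ρ_{r+1} = -σ_r`, hence `ρ_r + ∂ρ_{r+1} = λ_i ∂ρ_r`. If `∂V_r^{(k)} = -∂ρ_r ∂V_1^{(k)}` for
all `r`, applying `∂` to the recursion and using this identity gives
`∂V_r^{(k+1)} = ∂ρ_r (V_1^{(k)} + λ_i ∂V_1^{(k)})` for all `r`; with `∂ρ_1 = -1` this is the
claim for `k + 1`.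
-/

open Finset

/-- The Viète polynomial `ρ_r(λ)` (it vanishes for `r > n`). -/
noncomputable def viete (n : ℕ) (r : ℕ) (x : Fin n → ℝ) : ℝ :=
  (-1 : ℝ) ^ r * ∑ s ∈ Finset.powersetCard r (Finset.univ : Finset (Fin n)),
    ∏ j ∈ s, x j

/-- The generic separable potentials `V_r^{(k)}` of the one-Casimir (Benenti)
Stäckel systems, indexed here by `k − 1`:
`Vpot n 0 r = V_r^{(1)} = ρ_r` and
`Vpot n (k+1) r = V_r^{(k+2)} = −V_{r+1}^{(k+1)} + ρ_r V_1^{(k+1)}`.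
(Since `ρ_r = 0` for `r > n`, automatically `V_{n+1}^{(k)} = 0`.) -/
noncomputable def Vpot (n : ℕ) : ℕ → ℕ → (Fin n → ℝ) → ℝ
  | 0, r, x => viete n r x
  | (k + 1), r, x => -Vpot n k (r + 1) x + viete n r x * Vpot n k 1 x

theorem Multiset.esymm_cons_succ {R : Type*} [CommSemiring R] (a : R) (s : Multiset R) (r : ℕ) :
    (a ::ₘ s).esymm (r + 1) = s.esymm (r + 1) + a * s.esymm r := by
  simp [Multiset.esymm, Multiset.powersetCard_cons, Multiset.map_map, Multiset.sum_map_mul_left]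

theorem fderiv_apply_single_eq_deriv_update {ι E : Type*} [Fintype ι] [DecidableEq ι]
    [NormedAddCommGroup E] [NormedSpace ℝ E] {f : (ι → ℝ) → E} {x : ι → ℝ}
    (hf : DifferentiableAt ℝ f x) (i : ι) :
    fderiv ℝ f x (Pi.single i 1) = deriv (fun t => f (Function.update x i t)) (x i) := by
  rw [← Function.update_eq_self i x] at hf
  simpa [Function.comp_def] using
    (hf.hasFDerivAt.comp_hasDerivAt (x i) (hasDerivAt_update x i (x i))).deriv.symm

theorem differentiable_viete (n r : ℕ) : Differentiable ℝ (viete n r) := by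
  unfold viete
  fun_prop

theorem viete_eq_esymm (n r : ℕ) (x : Fin n → ℝ) :
    viete n r x = (-1) ^ r * (univ.val.map x).esymm r := by
  rw [viete, Finset.esymm_map_val]

noncomputable def vieteErase {n : ℕ} (i : Fin n) (r : ℕ) (x : Fin n → ℝ) : ℝ :=
  (-1) ^ r * ((univ.erase i).val.map x).esymm r

theorem vieteErase_zero {n : ℕ} (i : Fin n) (x : Fin n → ℝ) : vieteErase i 0 x = 1 := by
  simp [vieteErase, Multiset.esymm]

theorem vieteErase_update {n : ℕ} (i : Fin n) (r : ℕ) (x : Fin n → ℝ) (t : ℝ) :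
    vieteErase i r (Function.update x i t) = vieteErase i r x := by
  unfold vieteErase
  rw [Multiset.map_congr rfl fun j hj =>
    Function.update_of_ne (ne_of_mem_erase (mem_val.mp hj)) t x]

theorem viete_succ_eq {n : ℕ} (i : Fin n) (r : ℕ) (x : Fin n → ℝ) :
    viete n (r + 1) x = vieteErase i (r + 1) x - x i * vieteErase i r x := by
  have huniv : (univ : Finset (Fin n)).val = i ::ₘ (univ.erase i).val := by
    rw [erase_val, Multiset.cons_erase (mem_univ_val i)]
  rw [viete_eq_esymm, huniv, Multiset.map_cons, Multiset.esymm_cons_succ, vieteErase, vieteErase]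
  ring

theorem viete_zero (n : ℕ) : viete n 0 = fun _ => 1 := by
  funext x
  simp [viete]

theorem fderiv_viete_succ_apply_single {n : ℕ} (r : ℕ) (i : Fin n) (x : Fin n → ℝ) :
    fderiv ℝ (viete n (r + 1)) x (Pi.single i 1) = -vieteErase i r x := by
  have hline : (fun t => viete n (r + 1) (Function.update x i t))
      = fun t => vieteErase i (r + 1) x - t * vieteErase i r x := by
    funext t
    rw [viete_succ_eq i, vieteErase_update, vieteErase_update, Function.update_self]
  rw [fderiv_apply_single_eq_deriv_update (differentiable_viete n _ x) i, hline,
    (((hasDerivAt_id _).mul_const _).const_sub _).deriv]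
  ring

theorem fderiv_viete_one_apply_single {n : ℕ} (i : Fin n) (x : Fin n → ℝ) :
    fderiv ℝ (viete n 1) x (Pi.single i 1) = -1 := by
  rw [fderiv_viete_succ_apply_single, vieteErase_zero]

theorem viete_add_fderiv_viete_succ {n : ℕ} (r : ℕ) (i : Fin n) (x : Fin n → ℝ) :
    viete n r x + fderiv ℝ (viete n (r + 1)) x (Pi.single i 1)
      = x i * fderiv ℝ (viete n r) x (Pi.single i 1) := by
  cases r with
  | zero => simp [viete_zero, fderiv_viete_one_apply_single]
  | succ r =>
    rw [fderiv_viete_succ_apply_single, fderiv_viete_succ_apply_single, viete_succ_eq i]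
    ring

theorem differentiable_Vpot (n k r : ℕ) : Differentiable ℝ (Vpot n k r) := by
  induction k generalizing r with
  | zero => exact differentiable_viete n r
  | succ k ih => exact (ih (r + 1)).neg.add ((differentiable_viete n r).mul (ih 1))

theorem fderiv_Vpot_succ_apply (n k r : ℕ) (x v : Fin n → ℝ) :
    fderiv ℝ (Vpot n (k + 1) r) x v
      = -fderiv ℝ (Vpot n k (r + 1)) x v + fderiv ℝ (viete n r) x v * Vpot n k 1 x
        + viete n r x * fderiv ℝ (Vpot n k 1) x v := by
  have h : HasFDerivAt (Vpot n (k + 1) r) _ x :=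
    (differentiable_Vpot n k (r + 1) x).hasFDerivAt.neg.add
      ((differentiable_viete n r x).hasFDerivAt.mul (differentiable_Vpot n k 1 x).hasFDerivAt)
  simp only [h.fderiv, add_apply, neg_apply, smul_apply, smul_eq_mul]
  ring

theorem fderiv_Vpot_apply_single (n k r : ℕ) (i : Fin n) (x : Fin n → ℝ) :
    fderiv ℝ (Vpot n k r) x (Pi.single i 1)
      = -fderiv ℝ (viete n r) x (Pi.single i 1) * fderiv ℝ (Vpot n k 1) x (Pi.single i 1) := by
  induction k generalizing r with
  | zero =>
    show fderiv ℝ (viete n r) x _ = -_ * fderiv ℝ (viete n 1) x _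
    rw [fderiv_viete_one_apply_single]
    ring
  | succ k ih =>
    have hstep : ∀ r, fderiv ℝ (Vpot n (k + 1) r) x (Pi.single i 1)
        = fderiv ℝ (viete n r) x (Pi.single i 1)
          * (Vpot n k 1 x + x i * fderiv ℝ (Vpot n k 1) x (Pi.single i 1)) := by
      intro r
      rw [fderiv_Vpot_succ_apply, ih (r + 1)]
      linear_combination
        fderiv ℝ (Vpot n k 1) x (Pi.single i 1) * viete_add_fderiv_viete_succ r i x
    rw [hstep r, hstep 1, fderiv_viete_one_apply_single]
    ring

/-- every family `{V_1^{(k)},…,V_n^{(k)}}` satisfies the Stäckel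
separability conditions `∂_i V_r^{(k)} = v_r^i ∂_i V_1^{(k)}` with
`v_r^i = −∂ρ_r/∂λ_i`. -/
theorem stmt9 (n : ℕ) :
    ∀ k : ℕ, ∀ r ∈ Finset.Icc 1 n, ∀ i : Fin n, ∀ x : Fin n → ℝ,
      fderiv ℝ (Vpot n k r) x (Pi.single i 1)
        = -(fderiv ℝ (viete n r) x (Pi.single i 1))
            * fderiv ℝ (Vpot n k 1) x (Pi.single i 1) :=
  fun k r _ i x => fderiv_Vpot_apply_single n k r i x
end

section
/- Let G(q) = α q qᵀ + β qᵀ + q βᵀ + γ and G̃(q) = α̃ q qᵀ + β̃ qᵀ + q β̃ᵀ + γ̃ with α, α̃ ∈ ℝ, β, β̃ ∈ ℝⁿ constant vectors, γ, γ̃ constant symmetric n×n real matrices, and let U ⊆ ℝⁿ be an open set on which det G(q) ≠ 0. Then the (1,1)-tensor field L(q) = −G̃(q) G(q)⁻¹ on U has vanishing Nijenhuis torsion: for all i, j, k ∈ {1,…,n} and all q ∈ U, Σ_{l=1}^n ( L_{lj} ∂_l L_{ik} − L_{lk} ∂_l L_{ij} + L_{il} ∂_k L_{lj} − L_{il} ∂_j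 L_{lk} ) = 0, where ∂_l = ∂/∂q_l and L_{ik} denotes the (i,k) entry of L. -/
/-!
Differentiating `L G = -G̃` gives `∂_X L = -(∂_X G̃ + L ∂_X G) G⁻¹`, and for matrices of the
form `G(q) = α q qᵀ + β qᵀ + q βᵀ + γ` one has `∂_X G = X vᵀ + v Xᵀ` with `v = α q + β`. Hence
`∂_X L = -(X aᵀ + (L X) bᵀ + w Xᵀ G⁻¹)` for vectors `a, b, w` independent of `X`. Substituting
this into the torsion, the `a`- and `b`-terms cancel in pairs, and the `w`-terms cancel because
`G⁻¹` and `Lᵀ G⁻¹ = -G⁻¹ G̃ G⁻¹` are symmetric.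
-/

open Finset Matrix

/-- `G(q) = α q qᵀ + β qᵀ + q βᵀ + γ`. -/
def Gmat {n : ℕ} (α : ℝ) (β : Fin n → ℝ) (γ : Matrix (Fin n) (Fin n) ℝ)
    (q : Fin n → ℝ) : Matrix (Fin n) (Fin n) ℝ :=
  Matrix.of fun i j => α * q i * q j + β i * q j + q i * β j + γ i j

/-- `L(q) = −G̃(q) G(q)⁻¹`. -/
noncomputable def Lmat {n : ℕ} (α αt : ℝ) (β βt : Fin n → ℝ)
    (γ γt : Matrix (Fin n) (Fin n) ℝ) (q : Fin n → ℝ) :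
    Matrix (Fin n) (Fin n) ℝ :=
  -(Gmat αt βt γt q) * (Gmat α β γ q)⁻¹

section MatrixCalculus

variable {𝕜 E ι κ ν : Type*} [NontriviallyNormedField 𝕜] [NormedAddCommGroup E]
  [NormedSpace 𝕜 E] {x : E}

noncomputable def matrixFDeriv (M : E → Matrix κ ν 𝕜) (x v : E) : Matrix κ ν 𝕜 :=
  Matrix.of fun i j => fderiv 𝕜 (fun y => M y i j) x v

theorem differentiableAt_det [Fintype ι] [DecidableEq ι] {M : E → Matrix ι ι 𝕜}
    (hM : ∀ i j, DifferentiableAt 𝕜 (fun y => M y i j) x) :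
    DifferentiableAt 𝕜 (fun y => (M y).det) x := by
  simp only [det_apply]
  fun_prop

theorem differentiableAt_adjugate_apply [Fintype ι] [DecidableEq ι] {M : E → Matrix ι ι 𝕜}
    (hM : ∀ i j, DifferentiableAt 𝕜 (fun y => M y i j) x) (i j : ι) :
    DifferentiableAt 𝕜 (fun y => (M y).adjugate i j) x := by
  simp only [adjugate_apply]
  refine differentiableAt_det fun a b => ?_
  by_cases h : a = j <;> simp [updateRow_apply, h, hM]

theorem differentiableAt_inv_apply [Fintype ι] [DecidableEq ι] {M : E → Matrix ι ι 𝕜}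
    (hM : ∀ i j, DifferentiableAt 𝕜 (fun y => M y i j) x) (hx : (M x).det ≠ 0) (i j : ι) :
    DifferentiableAt 𝕜 (fun y => (M y)⁻¹ i j) x := by
  have h : (fun y => (M y)⁻¹ i j) = fun y => ((M y).det)⁻¹ * (M y).adjugate i j := by
    funext y
    rw [Matrix.inv_def, Ring.inverse_eq_inv', Matrix.smul_apply, smul_eq_mul]
  rw [h]
  exact ((differentiableAt_det hM).inv hx).mul (differentiableAt_adjugate_apply hM i j)

theorem matrixFDeriv_mul [Fintype κ] {A : E → Matrix ν κ 𝕜} {B : E → Matrix κ ι 𝕜}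
    (hA : ∀ i j, DifferentiableAt 𝕜 (fun y => A y i j) x)
    (hB : ∀ i j, DifferentiableAt 𝕜 (fun y => B y i j) x) (v : E) :
    matrixFDeriv (fun y => A y * B y) x v
      = matrixFDeriv A x v * B x + A x * matrixFDeriv B x v := by
  ext i j
  simp only [matrixFDeriv, of_apply, Matrix.add_apply, mul_apply, ← sum_add_distrib]
  rw [fderiv_fun_sum (A := fun k y => A y i k * B y k j) fun k _ => (hA i k).mul (hB k j),
    _root_.sum_apply]
  refine sum_congr rfl fun k _ => ?_
  rw [fderiv_fun_mul (hA i k) (hB k j)]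
  simp only [_root_.add_apply, _root_.smul_apply, smul_eq_mul]
  ring

theorem matrixFDeriv_neg {M : E → Matrix κ ν 𝕜} (v : E) :
    matrixFDeriv (fun y => -M y) x v = -matrixFDeriv M x v := by
  ext i j
  simp [matrixFDeriv, fderiv_fun_neg]

theorem Filter.EventuallyEq.matrixFDeriv_eq {M N : E → Matrix κ ν 𝕜} (h : M =ᶠ[nhds x] N)
    (v : E) : matrixFDeriv M x v = matrixFDeriv N x v := by
  ext i j
  simp only [matrixFDeriv, of_apply]
  rw [Filter.EventuallyEq.fderiv_eq (h.mono fun y hy => congrFun (congrFun hy i) j)]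

theorem matrixFDeriv_inv [Fintype ι] [DecidableEq ι] {M : E → Matrix ι ι 𝕜}
    (hM : ∀ i j, DifferentiableAt 𝕜 (fun y => M y i j) x) (hx : (M x).det ≠ 0) (v : E) :
    matrixFDeriv (fun y => (M y)⁻¹) x v = -((M x)⁻¹ * matrixFDeriv M x v * (M x)⁻¹) := by
  have hinv_mul : (fun y => (M y)⁻¹ * M y) =ᶠ[nhds x] fun _ => 1 := by
    filter_upwards [(differentiableAt_det hM).continuousAt.eventually_ne hx] with y hy
    exact nonsing_inv_mul _ hy.isUnit
  have h := hinv_mul.matrixFDeriv_eq v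
  have h_one : matrixFDeriv (fun _ => (1 : Matrix ι ι 𝕜)) x v = 0 := by
    ext i j
    simp [matrixFDeriv]
  rw [matrixFDeriv_mul (differentiableAt_inv_apply hM hx) hM, h_one,
    add_eq_zero_iff_eq_neg] at h
  calc matrixFDeriv (fun y => (M y)⁻¹) x v
      = matrixFDeriv (fun y => (M y)⁻¹) x v * M x * (M x)⁻¹ := by
        rw [Matrix.mul_assoc, mul_nonsing_inv _ hx.isUnit, Matrix.mul_one]
    _ = -((M x)⁻¹ * matrixFDeriv M x v * (M x)⁻¹) := by
        rw [h, Matrix.neg_mul, Matrix.mul_assoc]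

theorem matrixFDeriv_neg_mul_inv [Fintype ι] [DecidableEq ι] {F G : E → Matrix ι ι 𝕜}
    (hF : ∀ i j, DifferentiableAt 𝕜 (fun y => F y i j) x)
    (hG : ∀ i j, DifferentiableAt 𝕜 (fun y => G y i j) x) (hx : (G x).det ≠ 0) (v : E) :
    matrixFDeriv (fun y => -F y * (G y)⁻¹) x v
      = -(matrixFDeriv F x v + (-F x * (G x)⁻¹) * matrixFDeriv G x v) * (G x)⁻¹ := by
  rw [matrixFDeriv_mul (A := fun y => -F y) (fun i j => (hF i j).neg)
    (differentiableAt_inv_apply hG hx), matrixFDeriv_neg, matrixFDeriv_inv hG hx]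
  noncomm_ring

end MatrixCalculus

section NijenhuisTorsion

variable {ι R : Type*} [Fintype ι] [DecidableEq ι] [CommRing R]

/-- The torsion `N^i_{jk}` of `L` at a point where `dL l` is the partial derivative `∂_l L`. -/
def nijenhuisTorsion (L : Matrix ι ι R) (dL : ι → Matrix ι ι R) (i j k : ι) : R :=
  ∑ l, (L l j * dL l i k - L l k * dL l i j + L i l * dL k l j - L i l * dL j l k)

theorem nijenhuisTorsion_eq_zero {L A : Matrix ι ι R} (hA : A.IsSymm) (hLA : (Lᵀ * A).IsSymm)
    {a b w : ι → R} {dL : ι → Matrix ι ι R}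
    (hdL : ∀ l, dL l = -(vecMulVec (Pi.single l 1) a + vecMulVec (L *ᵥ Pi.single l 1) b
      + vecMulVec w (Pi.single l 1 ᵥ* A))) (i j k : ι) :
    nijenhuisTorsion L dL i j k = 0 := by
  have hdL_apply : ∀ l i c,
      dL l i c = -((if i = l then a c else 0) + L i l * b c + w i * A l c) := by
    intro l i c
    simp [hdL, vecMulVec_apply, Pi.single_apply]
  have hleft : ∀ j k,
      ∑ l, L l j * dL l i k = -(L i j * a k) - (L * L) i j * b k - w i * (Lᵀ * A) j k := by
    intro j k
    rw [sum_congr rfl fun l _ => show L l j * dL l i k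
        = -(if i = l then L l j * a k else 0) - L i l * L l j * b k - w i * (Lᵀ j l * A l k) by
      rw [hdL_apply]; split_ifs <;> simp only [transpose_apply] <;> ring]
    rw [sum_sub_distrib, sum_sub_distrib, sum_neg_distrib, sum_ite_eq, ← sum_mul, ← mul_sum]
    simp [mul_apply]
  have hright : ∀ j k,
      ∑ l, L i l * dL k l j = -(L i k * a j) - (L * L) i k * b j - (L *ᵥ w) i * A k j := by
    intro j k
    rw [sum_congr rfl fun l _ => show L i l * dL k l j
        = -(if l = k then L i l * a j else 0) - L i l * L l k * b j - L i l * w l * A k j by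
      rw [hdL_apply]; split_ifs <;> ring]
    rw [sum_sub_distrib, sum_sub_distrib, sum_neg_distrib, sum_ite_eq', ← sum_mul, ← sum_mul]
    simp [mul_apply, mulVec, dotProduct]
  unfold nijenhuisTorsion
  rw [sum_sub_distrib, sum_add_distrib, sum_sub_distrib, hleft, hleft, hright, hright,
    hA.apply j k, hLA.apply j k]
  ring

end NijenhuisTorsion

section QuadraticMatrixField

variable {n : ℕ} {α αt : ℝ} {β βt : Fin n → ℝ} {γ γt : Matrix (Fin n) (Fin n) ℝ}

theorem differentiableAt_Gmat_apply (q : Fin n → ℝ) (i j : Fin n) :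
    DifferentiableAt ℝ (fun w => Gmat α β γ w i j) q := by
  simp only [Gmat, of_apply]
  fun_prop

theorem matrixFDeriv_Gmat (q X : Fin n → ℝ) :
    matrixFDeriv (Gmat α β γ) q X = vecMulVec X (α • q + β) + vecMulVec (α • q + β) X := by
  ext i j
  have hi := hasFDerivAt_apply (𝕜 := ℝ) (F' := fun _ : Fin n => ℝ) i q
  have hj := hasFDerivAt_apply (𝕜 := ℝ) (F' := fun _ : Fin n => ℝ) j q
  have hG := ((((hi.const_mul α).fun_mul hj).fun_add (hj.const_mul (β i))).fun_add
    (hi.mul_const (β j))).add_const (γ i j)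
  simp only [matrixFDeriv, Gmat, of_apply, hG.fderiv]
  simp [vecMulVec_apply]
  ring

theorem Gmat_isSymm (hγ : γ.IsSymm) (q : Fin n → ℝ) : (Gmat α β γ q).IsSymm :=
  IsSymm.ext fun i j => by simp only [Gmat, of_apply, hγ.apply i j]; ring

theorem matrixFDeriv_Lmat {q : Fin n → ℝ} (hq : (Gmat α β γ q).det ≠ 0) (X : Fin n → ℝ) :
    matrixFDeriv (Lmat α αt β βt γ γt) q X
      = -(vecMulVec X ((αt • q + βt) ᵥ* (Gmat α β γ q)⁻¹)
        + vecMulVec (Lmat α αt β βt γ γt q *ᵥ X) ((α • q + β) ᵥ* (Gmat α β γ q)⁻¹)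
        + vecMulVec (αt • q + βt + Lmat α αt β βt γ γt q *ᵥ (α • q + β))
            (X ᵥ* (Gmat α β γ q)⁻¹)) := by
  have h : matrixFDeriv (Lmat α αt β βt γ γt) q X = _ :=
    matrixFDeriv_neg_mul_inv (differentiableAt_Gmat_apply q) (differentiableAt_Gmat_apply q) hq X
  rw [h, matrixFDeriv_Gmat, matrixFDeriv_Gmat, ← Lmat]
  simp only [Matrix.neg_mul, Matrix.mul_add, Matrix.add_mul, mul_vecMulVec, vecMulVec_mul]
  simp only [add_vecMulVec]
  abel

theorem transpose_Lmat_mul_inv_isSymm (hγ : γ.IsSymm) (hγt : γt.IsSymm) (q : Fin n → ℝ) :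
    ((Lmat α αt β βt γ γt q)ᵀ * (Gmat α β γ q)⁻¹).IsSymm := by
  have hA := (Gmat_isSymm (α := α) (β := β) hγ q).inv
  have hB := Gmat_isSymm (α := αt) (β := βt) hγt q
  simp only [IsSymm, Lmat, transpose_mul, transpose_neg, hA.eq, hB.eq, Matrix.mul_assoc]

end QuadraticMatrixField

theorem stmt19_general (n : ℕ) (α αt : ℝ) (β βt : Fin n → ℝ)
    (γ γt : Matrix (Fin n) (Fin n) ℝ) (hγ : γ.IsSymm) (hγt : γt.IsSymm)
    (U : Set (Fin n → ℝ))
    (hdet : ∀ q ∈ U, (Gmat α β γ q).det ≠ 0) :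
    ∀ (i j k : Fin n), ∀ q ∈ U,
      ∑ l : Fin n,
        (Lmat α αt β βt γ γt q l j
            * fderiv ℝ (fun w => Lmat α αt β βt γ γt w i k) q (Pi.single l 1)
          - Lmat α αt β βt γ γt q l k
            * fderiv ℝ (fun w => Lmat α αt β βt γ γt w i j) q (Pi.single l 1)
          + Lmat α αt β βt γ γt q i l
            * fderiv ℝ (fun w => Lmat α αt β βt γ γt w l j) q (Pi.single k 1)
          - Lmat α αt β βt γ γt q i l
            * fderiv ℝ (fun w => Lmat α αt β βt γ γt w l k) q (Pi.single j 1))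
        = 0 := by
  intro i j k q hq
  exact nijenhuisTorsion_eq_zero (Gmat_isSymm hγ q).inv (transpose_Lmat_mul_inv_isSymm hγ hγt q)
    (fun l => matrixFDeriv_Lmat (hdet q hq) (Pi.single l 1)) i j k

/-- STATEMENT 19: on an open set `U` where `det G ≠ 0`, the (1,1)-tensor field
`L = −G̃ G⁻¹` has vanishing Nijenhuis torsion:
`Σ_l (L_{lj} ∂_l L_{ik} − L_{lk} ∂_l L_{ij} + L_{il} ∂_k L_{lj} − L_{il} ∂_j L_{lk}) = 0`. -/
theorem stmt19 (n : ℕ) (α αt : ℝ) (β βt : Fin n → ℝ)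
    (γ γt : Matrix (Fin n) (Fin n) ℝ) (hγ : γ.IsSymm) (hγt : γt.IsSymm)
    (U : Set (Fin n → ℝ)) (hU : IsOpen U)
    (hdet : ∀ q ∈ U, (Gmat α β γ q).det ≠ 0) :
    ∀ (i j k : Fin n), ∀ q ∈ U,
      ∑ l : Fin n,
        (Lmat α αt β βt γ γt q l j
            * fderiv ℝ (fun w => Lmat α αt β βt γ γt w i k) q (Pi.single l 1)
          - Lmat α αt β βt γ γt q l k
            * fderiv ℝ (fun w => Lmat α αt β βt γ γt w i j) q (Pi.single l 1)
          + Lmat α αt β βt γ γt q i l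
            * fderiv ℝ (fun w => Lmat α αt β βt γ γt w l j) q (Pi.single k 1)
          - Lmat α αt β βt γ γt q i l
            * fderiv ℝ (fun w => Lmat α αt β βt γ γt w l k) q (Pi.single j 1))
        = 0 :=
  stmt19_general n α αt β βt γ γt hγ hγt U hdet
end
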